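/- Let f₁ be the uniform density on [0,1] and f₂(v) = 1 + δ φ((v − 1/2)/δ) with the perturbation function φ and δ ∈ (0, 1/8]. Then the squared Hellinger distance satisfies H(f₁ ∥ f₂)² = ∫₀¹ ( √(f₁(v)) − √(f₂(v)) )² dv ≤ (2√2 / 3) δ³. In particular, choosing δ = (3 / (8√2 n))^{1/3} yields H(f₁ ∥ f₂)² ≤ 1/(4n), while |f₁(1/2) − f₂(1/2)| = δ. -/

import Mathlib

open Set

/-- The perturbation function `φ`: `t+1` on `[-1,0]`, `-t+1` on `[0,2]`, `t-3` on `[2,3]`,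
and `0` elsewhere. -/
noncomputable def pert (t : ℝ) : ℝ :=
  if t ∈ Icc (-1 : ℝ) 0 then t + 1
  else if t ∈ Icc (0 : ℝ) 2 then -t + 1
  else if t ∈ Icc (2 : ℝ) 3 then t - 3
  else 0

/-- The uniform density `f₁ ≡ 1` on `[0,1]`. -/
noncomputable def fOne (_v : ℝ) : ℝ := 1

/-- The perturbed density `f₂(v) = 1 + δ φ((v - 1/2)/δ)`. -/
noncomputable def fTwo (δ : ℝ) (v : ℝ) : ℝ := 1 + δ * pert ((v - 1 / 2) / δ)

/-- The squared Hellinger distance between densities `g` and `h` on `[0,1]`. -/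
noncomputable def hellingerSq (g h : ℝ → ℝ) : ℝ :=
  ∫ v in (0 : ℝ)..1, (Real.sqrt (g v) - Real.sqrt (h v)) ^ 2

open MeasureTheory intervalIntegral

/-! For `h ≥ 1/4` one has `(1 - √h)² = (1 - h)² / (1 + √h)² ≤ (1 - h)² / 2`, hence
`H(f₁ ‖ f₂)² ≤ ½ ∫₀¹ δ² φ((v - 1/2)/δ)² dv`. Once `δ ≤ 1/6` the rescaled support `[-1, 3]` of `φ`
fits inside `[0, 1]`, so the substitution `t = (v - 1/2)/δ` turns this into `½ δ³ ∫ φ² = (2/3) δ³`.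
The stated choice of `δ` makes `(2√2/3) δ³ = 1/(4n)`, and `φ(0) = 1` gives `f₂(1/2) = 1 + δ`. -/

lemma measurable_pert : Measurable pert :=
  .ite measurableSet_Icc (by fun_prop) <|
    .ite measurableSet_Icc (by fun_prop) <| .ite measurableSet_Icc (by fun_prop) measurable_const

lemma abs_pert_le_one (t : ℝ) : |pert t| ≤ 1 := by
  unfold pert; split_ifs <;> grind

lemma pert_zero : pert 0 = 1 := by norm_num [pert]

lemma pert_of_le_neg_one {t : ℝ} (ht : t ≤ -1) : pert t = 0 := by
  unfold pert; split_ifs <;> grind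

lemma pert_of_mem_Icc_zero_two {t : ℝ} (ht : t ∈ Icc 0 2) : pert t = -t + 1 := by
  unfold pert; split_ifs <;> grind

lemma pert_of_mem_Icc_two_three {t : ℝ} (ht : t ∈ Icc 2 3) : pert t = t - 3 := by
  unfold pert; split_ifs <;> grind

lemma pert_of_three_le {t : ℝ} (ht : 3 ≤ t) : pert t = 0 := by
  unfold pert; split_ifs <;> grind

lemma intervalIntegrable_pert_comp_sq {f : ℝ → ℝ} (hf : Measurable f) (a b : ℝ) :
    IntervalIntegrable (fun t => pert (f t) ^ 2) volume a b := by
  refine (intervalIntegrable_const (c := (1 : ℝ))).mono_fun'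
    ((measurable_pert.comp hf).pow_const 2).aestronglyMeasurable (ae_of_all _ fun t => ?_)
  simpa [abs_le, sq_le_one_iff_abs_le_one] using abs_pert_le_one (f t)

lemma integral_pert_sq {a b : ℝ} (ha : a ≤ -1) (hb : 3 ≤ b) :
    ∫ t in a..b, pert t ^ 2 = 4 / 3 := by
  have hi (c d : ℝ) : IntervalIntegrable (fun t => pert t ^ 2) volume c d :=
    intervalIntegrable_pert_comp_sq measurable_id c d
  have congr_sq {c d : ℝ} {f : ℝ → ℝ} (hcd : c ≤ d) (h : ∀ t ∈ Icc c d, pert t = f t) :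
      ∫ t in c..d, pert t ^ 2 = ∫ t in c..d, f t ^ 2 :=
    intervalIntegral.integral_congr fun t ht => by rw [uIcc_of_le hcd] at ht; simp [h t ht]
  rw [← integral_add_adjacent_intervals (hi a (-1)) (hi (-1) b),
    ← integral_add_adjacent_intervals (hi (-1) 0) (hi 0 b),
    ← integral_add_adjacent_intervals (hi 0 2) (hi 2 b),
    ← integral_add_adjacent_intervals (hi 2 3) (hi 3 b),
    congr_sq ha fun t ht => pert_of_le_neg_one ht.2,
    congr_sq (by norm_num) fun t ht => if_pos ht,
    congr_sq (by norm_num) fun t ht => pert_of_mem_Icc_zero_two ht,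
    congr_sq (by norm_num) fun t ht => pert_of_mem_Icc_two_three ht,
    congr_sq hb fun t ht => pert_of_three_le ht.1]
  norm_num [integral_comp_add_right (fun t : ℝ => t ^ 2), neg_add_eq_sub,
    integral_comp_sub_left (fun t : ℝ => t ^ 2), integral_comp_sub_right (fun t : ℝ => t ^ 2)]

lemma integral_pert_sq_rescaled {δ : ℝ} (hδ : 0 < δ) (hδ' : δ ≤ 1 / 6) :
    ∫ v in (0 : ℝ)..1, pert ((v - 1 / 2) / δ) ^ 2 = 4 / 3 * δ := by
  rw [integral_comp_sub_right (fun x => pert (x / δ) ^ 2),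
    integral_comp_div (fun t => pert t ^ 2) hδ.ne', integral_pert_sq, smul_eq_mul, mul_comm]
  · rw [div_le_iff₀ hδ]; linarith
  · rw [le_div_iff₀ hδ]; linarith

lemma sq_one_sub_sqrt_le {y : ℝ} (hy : 1 / 4 ≤ y) : (1 - √y) ^ 2 ≤ (1 - y) ^ 2 / 2 := by
  have hs : 1 / 2 ≤ √y := (Real.le_sqrt (by norm_num) (by linarith)).2 (by linarith)
  have hy' : √y ^ 2 = y := Real.sq_sqrt (by linarith)
  calc (1 - √y) ^ 2 ≤ ((1 - √y) * (1 + √y)) ^ 2 / 2 := by nlinarith [sq_nonneg (1 - √y)]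
    _ = (1 - y) ^ 2 / 2 := by linear_combination (√y ^ 2 + y - 2) / 2 * hy'

lemma hellingerSq_fOne_le {h : ℝ → ℝ} (hh : ∀ v ∈ Icc (0 : ℝ) 1, 1 / 4 ≤ h v)
    (hi : IntervalIntegrable (fun v => (1 - h v) ^ 2) volume 0 1) :
    hellingerSq fOne h ≤ (∫ v in (0 : ℝ)..1, (1 - h v) ^ 2) / 2 := by
  rw [hellingerSq, ← intervalIntegral.integral_div, integral_of_le zero_le_one,
    integral_of_le zero_le_one]
  refine integral_mono_of_nonneg (ae_of_all _ fun v => sq_nonneg _) (hi.1.div_const 2) ?_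
  filter_upwards [ae_restrict_mem measurableSet_Ioc] with v hv
  simpa [fOne] using sq_one_sub_sqrt_le (hh v (Ioc_subset_Icc_self hv))

lemma one_fourth_le_fTwo {δ : ℝ} (hδ : 0 ≤ δ) (hδ' : δ ≤ 3 / 4) (v : ℝ) : 1 / 4 ≤ fTwo δ v := by
  have := neg_le_of_abs_le (abs_pert_le_one ((v - 1 / 2) / δ))
  rw [fTwo]
  nlinarith

lemma hellingerSq_fOne_fTwo_le {δ : ℝ} (hδ : 0 < δ) (hδ' : δ ≤ 1 / 6) :
    hellingerSq fOne (fTwo δ) ≤ 2 / 3 * δ ^ 3 := by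
  have hsq : (fun v => (1 - fTwo δ v) ^ 2) = fun v => δ ^ 2 * pert ((v - 1 / 2) / δ) ^ 2 := by
    funext v; rw [fTwo]; ring
  have hi : IntervalIntegrable (fun v => (1 - fTwo δ v) ^ 2) volume 0 1 :=
    hsq ▸ (intervalIntegrable_pert_comp_sq (by fun_prop) 0 1).const_mul _
  calc hellingerSq fOne (fTwo δ) ≤ (∫ v in (0 : ℝ)..1, (1 - fTwo δ v) ^ 2) / 2 :=
        hellingerSq_fOne_le (fun v _ => one_fourth_le_fTwo hδ.le (by linarith) v) hi
    _ = 2 / 3 * δ ^ 3 := by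
        rw [hsq, intervalIntegral.integral_const_mul, integral_pert_sq_rescaled hδ hδ']; ring

lemma fTwo_half (δ : ℝ) : fTwo δ (1 / 2) = 1 + δ := by simp [fTwo, pert_zero]

/-- for `δ ∈ (0, 1/8]`, the squared Hellinger distance between the uniform
density `f₁` and the perturbed density `f₂` satisfies `H(f₁‖f₂)² ≤ (2√2/3) δ³`; in particular,
choosing `δ = (3/(8√2 n))^{1/3}` yields `H(f₁‖f₂)² ≤ 1/(4n)`; moreover
`|f₁(1/2) - f₂(1/2)| = δ`. -/
theorem stmt17_hellinger_bound
    (δ : ℝ) (hδ : 0 < δ) (hδ' : δ ≤ 1 / 8) :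
    hellingerSq fOne (fTwo δ) ≤ 2 * Real.sqrt 2 / 3 * δ ^ 3 ∧
    |fOne (1 / 2) - fTwo δ (1 / 2)| = δ ∧
    (∀ n : ℕ, 0 < n → δ = (3 / (8 * Real.sqrt 2 * n)) ^ ((1 : ℝ) / 3) →
      hellingerSq fOne (fTwo δ) ≤ 1 / (4 * n)) := by
  have hbound : hellingerSq fOne (fTwo δ) ≤ 2 * √2 / 3 * δ ^ 3 := by
    refine (hellingerSq_fOne_fTwo_le hδ (by linarith)).trans ?_
    have : 1 ≤ √2 := Real.one_le_sqrt.2 one_le_two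
    gcongr
    linarith
  refine ⟨hbound, by rw [fOne, fTwo_half]; simp [abs_of_pos hδ], fun n _ hδn => hbound.trans_eq ?_⟩
  have hcube : δ ^ 3 = 3 / (8 * √2 * n) := by
    rw [hδn, one_div]
    exact_mod_cast Real.rpow_inv_natCast_pow (by positivity) three_ne_zero
  rw [hcube]
  field_simp
  ring
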